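/- Suppose R: ℕ → A satisfies R(0) = 1 and the recurrence n·R(n) = Σ_{k=1}^{n} I(k)·R(n−k) for all n ≥ 1. Then for every n ≥ 1, R(n) = Σ_{m=1}^{n} Σ_{(j₁,…,j_m)} C₋(j₁,…,j_m) · I(j₁)·I(j₂)⋯I(j_m), where the inner sum runs over all m-tuples of positive integers with j₁ + ⋯ + j_m = n and C₋(j₁,…,j_m) = 1/(j_m·(j_m+j_{m−1})·(j_m+j_{m−1}+j_{m−2})⋯(j_m+⋯+j₁)). -/

import Mathlib

/-!
The recurrence determines `R` from `R 0 = 1`, since `n` is invertible in `ℚ`; so it suffices that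
the right-hand side `S` satisfies it. Splitting off the first block `j₁ = k` of a composition of
`n` leaves a composition of `n - k`, and `C₋(j₁, …, j_m) = n⁻¹ · C₋(j₂, …, j_m)` because the last
factor of `C₋` is the full sum `j₁ + ⋯ + j_m = n`. Hence `n S(n) = Σ_k I(k) S(n - k)`.
-/

open Finset

theorem eq_of_smul_eq_sum_mul {A : Type*} [NonUnitalNonAssocSemiring A] [Module ℚ A]
    (I R R' : ℕ → A) (h0 : R 0 = R' 0)
    (hR : ∀ n : ℕ, 1 ≤ n → (n : ℚ) • R n = ∑ k ∈ Icc 1 n, I k * R (n - k))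
    (hR' : ∀ n : ℕ, 1 ≤ n → (n : ℚ) • R' n = ∑ k ∈ Icc 1 n, I k * R' (n - k)) :
    R = R' := by
  funext n
  induction n using Nat.strong_induction_on with
  | _ n ih =>
    rcases Nat.eq_zero_or_pos n with rfl | hn
    · exact h0
    have hsum : ∑ k ∈ Icc 1 n, I k * R (n - k) = ∑ k ∈ Icc 1 n, I k * R' (n - k) :=
      sum_congr rfl fun k hk => by rw [ih (n - k) (by grind)]
    have hn0 : (n : ℚ) ≠ 0 := by positivity
    exact smul_right_injective A hn0 ((hR n hn).trans (hsum.trans (hR' n hn).symm))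

namespace List

/-- The coefficient `C₋(j₁, …, j_m)` of the list `[j₁, …, j_m]`. -/
noncomputable def prodInvReverseSums (l : List ℕ) : ℚ :=
  ∏ i ∈ Finset.range l.length, ((l.reverse.take (i + 1)).sum : ℚ)⁻¹

theorem prodInvReverseSums_nil : prodInvReverseSums [] = 1 := by simp [prodInvReverseSums]

theorem prodInvReverseSums_cons (k : ℕ) (l : List ℕ) :
    prodInvReverseSums (k :: l) = ((k :: l).sum : ℚ)⁻¹ * prodInvReverseSums l := by
  have htake (i : ℕ) (hi : i < l.length) :
      (l.reverse ++ [k]).take (i + 1) = l.reverse.take (i + 1) :=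
    List.take_append_of_le_length (by simpa using hi)
  rw [prodInvReverseSums, length_cons, Finset.prod_range_succ, mul_comm, reverse_cons,
    take_of_length_le (by simp), sum_append, sum_reverse, prodInvReverseSums]
  congr 1
  · simp [add_comm]
  · exact Finset.prod_congr rfl fun i hi => by rw [htake i (Finset.mem_range.mp hi)]

end List

namespace Composition

theorem headI_cons_tail_blocks {n : ℕ} (hn : 0 < n) (c : Composition n) :
    c.blocks.headI :: c.blocks.tail = c.blocks := by
  cases hb : c.blocks with
  | nil => exact absurd (c.blocks_eq_nil.mp hb) hn.ne'
  | cons k l => rfl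

theorem headI_add_sum_tail_blocks {n : ℕ} (hn : 0 < n) (c : Composition n) :
    c.blocks.headI + c.blocks.tail.sum = n := by
  rw [← List.sum_cons, headI_cons_tail_blocks hn c, c.blocks_sum]

theorem sum_eq_sum_sum_cons {M : Type*} [AddCommMonoid M] {n : ℕ} (hn : 0 < n)
    (f : List ℕ → M) :
    ∑ c : Composition n, f c.blocks =
      ∑ k ∈ Icc 1 n, ∑ d : Composition (n - k), f (k :: d.blocks) := by
  rw [sum_sigma']
  refine sum_bij' (fun c _ => ⟨c.blocks.headI, ⟨c.blocks.tail,
      fun hi => c.blocks_pos (List.mem_of_mem_tail hi),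
      by have := headI_add_sum_tail_blocks hn c; omega⟩⟩)
    (fun p hp => ⟨p.1 :: p.2.blocks, ?_, ?_⟩) (fun c _ => ?_) (fun _ _ => mem_univ _)
    (fun c _ => Composition.ext (headI_cons_tail_blocks hn c)) (fun _ _ => rfl)
    (fun c _ => congrArg f (headI_cons_tail_blocks hn c).symm)
  · obtain ⟨hk, -⟩ := mem_Icc.mp (mem_sigma.mp hp).1
    exact fun hi => (List.mem_cons.mp hi).elim (· ▸ hk) p.2.one_le_blocks
  · obtain ⟨hk, hkn⟩ := mem_Icc.mp (mem_sigma.mp hp).1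
    rw [List.sum_cons, p.2.blocks_sum]
    omega
  · have hhead : 1 ≤ c.blocks.headI :=
      c.one_le_blocks (headI_cons_tail_blocks hn c ▸ List.mem_cons_self)
    have := headI_add_sum_tail_blocks hn c
    simp only [mem_sigma, mem_Icc, mem_univ, and_true]
    omega

theorem sum_zero_eq_apply_nil {M : Type*} [AddCommMonoid M] (f : List ℕ → M) :
    ∑ c : Composition 0, f c.blocks = f [] := by
  have hnil (c : Composition 0) : c.blocks = [] := c.blocks_eq_nil.mpr rfl
  simp [hnil, composition_card]

end Composition

noncomputable def compositionExpansion {A : Type*} [Semiring A] [Algebra ℚ A] (I : ℕ → A)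
    (n : ℕ) : A :=
  ∑ c : Composition n, c.blocks.prodInvReverseSums • (c.blocks.map I).prod

section
variable {A : Type*} [Semiring A] [Algebra ℚ A] (I : ℕ → A)

theorem compositionExpansion_zero : compositionExpansion I 0 = 1 := by
  rw [compositionExpansion,
    Composition.sum_zero_eq_apply_nil fun l => l.prodInvReverseSums • (l.map I).prod,
    List.prodInvReverseSums_nil, List.map_nil, List.prod_nil, one_smul]

theorem smul_compositionExpansion {n : ℕ} (hn : 1 ≤ n) :
    (n : ℚ) • compositionExpansion I n =
      ∑ k ∈ Icc 1 n, I k * compositionExpansion I (n - k) := by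
  have hcoef (k : ℕ) (hk : k ∈ Icc 1 n) (d : Composition (n - k)) :
      ((n : ℚ) * (k :: d.blocks).prodInvReverseSums) • ((k :: d.blocks).map I).prod =
        I k * (d.blocks.prodInvReverseSums • (d.blocks.map I).prod) := by
    have hsum : (k :: d.blocks).sum = n := by
      rw [List.sum_cons, d.blocks_sum]
      grind
    have hn0 : (n : ℚ) ≠ 0 := by positivity
    rw [List.prodInvReverseSums_cons, hsum, mul_inv_cancel_left₀ hn0, List.map_cons,
      List.prod_cons, mul_smul_comm]
  calc (n : ℚ) • compositionExpansion I n
      = ∑ c : Composition n,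
          ((n : ℚ) * c.blocks.prodInvReverseSums) • (c.blocks.map I).prod := by
        simp only [compositionExpansion, smul_sum, smul_smul]
    _ = ∑ k ∈ Icc 1 n, ∑ d : Composition (n - k),
          I k * (d.blocks.prodInvReverseSums • (d.blocks.map I).prod) := by
        rw [Composition.sum_eq_sum_sum_cons hn
          (fun l => ((n : ℚ) * l.prodInvReverseSums) • (l.map I).prod)]
        exact sum_congr rfl fun k hk => sum_congr rfl fun d _ => hcoef k hk d
    _ = ∑ k ∈ Icc 1 n, I k * compositionExpansion I (n - k) := by
        simp only [compositionExpansion, mul_sum]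

end

/-- Let `A` be an associative unital `ℚ`-algebra and `I(1), I(2), …` an
arbitrary sequence in `A`.  If `R : ℕ → A` satisfies `R(0) = 1` and
`n·R(n) = Σ_{k=1}^{n} I(k)·R(n−k)` for all `n ≥ 1`, then for every `n ≥ 1`,
`R(n) = Σ_{m=1}^{n} Σ_{j₁+⋯+j_m=n, jᵢ≥1} C₋(j₁,…,j_m)·I(j₁)⋯I(j_m)`, where
`C₋(j₁,…,j_m) = 1/(j_m(j_m+j_{m−1})⋯(j_m+⋯+j₁))`. -/
theorem stmt7 (A : Type*) [Ring A] [Algebra ℚ A] (I : ℕ → A) (R : ℕ → A)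
    (hR0 : R 0 = 1)
    (hrec : ∀ n : ℕ, 1 ≤ n → (n : ℚ) • R n = ∑ k ∈ Finset.Icc 1 n, I k * R (n - k))
    (n : ℕ) (hn : 1 ≤ n) :
    R n = ∑ m ∈ Finset.Icc 1 n,
      ∑ c ∈ Finset.univ.filter (fun c : Composition n => c.length = m),
        (∏ i ∈ Finset.range c.length, (((c.blocks.reverse.take (i + 1)).sum : ℚ))⁻¹) •
          (c.blocks.map I).prod := by
  have hR : R = compositionExpansion I :=
    eq_of_smul_eq_sum_mul I R _ (by rw [hR0, compositionExpansion_zero]) hrec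
      fun _ hm => smul_compositionExpansion I hm
  rw [hR, compositionExpansion, ← sum_fiberwise_of_maps_to
    fun c _ => mem_Icc.mpr ⟨c.length_pos_of_pos hn, c.length_le⟩]
  rfl
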